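/- arXiv:2304.13545 — 2 statements merged into one kernel-verified Lean document; each statement's English description precedes it below -/
import Mathlib

section
/- Let X have triangular density f_X(x) = s/C - (s²/C²)|x| on [-C/s, C/s] and let O ~ Binomial(m,q) be independent, with P_k = C(m,k) q^k (1-q)^{m-k} and P_{-1} = P_{m+1} = 0. Then ψ = X + (C/s)·O has density f_ψ(y) = (s/C)[(k+1)P_k - k·P_{k+1}] + (s²/C²)(P_{k+1} - P_k)·y for y ∈ [kC/s, (k+1)C/s], for each k = -1, 0, ..., m. -/
set_option maxHeartbeats 1000000

open MeasureTheory ProbabilityTheory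

/-- Binomial probability `P_k = C(m,k) q^k (1-q)^{m-k}`, extended by `0` outside `0 ≤ k ≤ m`
(so that `P_{-1} = P_{m+1} = 0`). -/
noncomputable def binomProb (m : ℕ) (q : ℝ) (k : ℤ) : ℝ :=
  if 0 ≤ k ∧ k ≤ (m : ℤ) then (m.choose k.toNat : ℝ) * q ^ k.toNat * (1 - q) ^ (m - k.toNat)
  else 0

lemma bq_core (s : ℕ) (hs : 0 < s) (C : ℝ) (hC : 0 < C)
    (m : ℕ) (q : ℝ) (y : ℝ)
    (hy : ∀ n : ℤ, y ≠ (n : ℝ) * (C / (s : ℝ))) :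
    ∑ k ∈ Finset.range (m + 2),
      ((m.choose k : ℝ) * q ^ k * (1 - q) ^ (m - k)) *
        (if y - C / (s : ℝ) * k ∈ Set.Icc (-(C / (s : ℝ))) (C / (s : ℝ)) then
          (s : ℝ) / C - (s : ℝ) ^ 2 / C ^ 2 * |y - C / (s : ℝ) * k| else 0)
    = (if y ∈ Set.Icc (-(C / (s : ℝ))) (((m : ℝ) + 1) * C / (s : ℝ)) then
          ((s : ℝ) / C) * (((⌊y * (s : ℝ) / C⌋ : ℝ) + 1) * binomProb m q ⌊y * (s : ℝ) / C⌋
              - (⌊y * (s : ℝ) / C⌋ : ℝ) * binomProb m q (⌊y * (s : ℝ) / C⌋ + 1))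
            + ((s : ℝ) ^ 2 / C ^ 2) *
              (binomProb m q (⌊y * (s : ℝ) / C⌋ + 1) - binomProb m q ⌊y * (s : ℝ) / C⌋) * y
        else 0) := by
  have hs' : (0 : ℝ) < s := by exact_mod_cast hs
  set c : ℝ := C / (s : ℝ) with hc_def
  have hc : 0 < c := div_pos hC hs'
  have hysc : y * (s : ℝ) / C = y / c := by
    rw [hc_def, div_div_eq_mul_div]
  set j : ℤ := ⌊y * (s : ℝ) / C⌋ with hj_def
  have hyc : ∀ n : ℤ, y / c ≠ (n : ℝ) := by
    intro n h
    exact hy n (by rw [← h]; field_simp)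
  have hj1 : (j : ℝ) * c < y := by
    have h1 : (j : ℝ) ≤ y / c := by rw [hj_def, hysc]; exact Int.floor_le _
    have h2 : (j : ℝ) < y / c := lt_of_le_of_ne h1 (fun h => hyc j h.symm)
    calc (j : ℝ) * c < (y / c) * c := by exact mul_lt_mul_of_pos_right h2 hc
    _ = y := by field_simp
  have hj2 : y < ((j : ℝ) + 1) * c := by
    have h2 : y / c < (j : ℝ) + 1 := by
      rw [hj_def, hysc]; exact Int.lt_floor_add_one _
    calc y = (y / c) * c := by field_simp
    _ < ((j : ℝ) + 1) * c := mul_lt_mul_of_pos_right h2 hc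
  by_cases hmem : y ∈ Set.Icc (-c) (((m : ℝ) + 1) * C / (s : ℝ))
  · rw [if_pos hmem]
    obtain ⟨hm1, hm2⟩ := hmem
    have hm2' : y < ((m : ℝ) + 1) * c := by
      rcases lt_or_eq_of_le hm2 with h | h
      · calc y < ((m : ℝ) + 1) * C / (s : ℝ) := h
          _ = ((m : ℝ) + 1) * c := by rw [hc_def]; ring
      · exact absurd h (by
          have := hy ((m : ℤ) + 1)
          push_cast at this
          intro hcontra
          exact this (by rw [hcontra, hc_def]; ring))
    have hjm : j ≤ (m : ℤ) := by
      have h1 : (j : ℝ) < (m : ℝ) + 1 := by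
        nlinarith
      exact_mod_cast Int.lt_add_one_iff.mp (by exact_mod_cast h1)
    have hjneg : -1 ≤ j := by
      have h1 : (-2 : ℝ) < (j : ℝ) := by nlinarith
      have h2 : (-2 : ℤ) < j := by exact_mod_cast h1
      omega
    rcases lt_or_ge j 0 with hj0 | hj0
    · -- j = -1 case
      have hjm1 : j = -1 := le_antisymm (by omega) hjneg
      have hy0 : y < 0 := by
        have := hj2; rw [hjm1] at this; push_cast at this; linarith
      have hyneg : -c < y := by
        have := hj1; rw [hjm1] at this; push_cast at this; linarith
      rw [Finset.sum_eq_single 0]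
      · have hmm : y - c * ((0:ℕ):ℝ) ∈ Set.Icc (-c) c := by
          simp only [Set.mem_Icc]; push_cast; constructor <;> linarith
        rw [if_pos hmm]
        rw [hjm1]
        rw [show binomProb m q (-1) = 0 from by simp [binomProb]]
        rw [show binomProb m q (-1 + 1) = (m.choose 0 : ℝ) * q ^ 0 * (1 - q) ^ (m - 0) from by
          simp [binomProb]]
        rw [abs_of_neg (by push_cast; linarith : y - c * (0 : ℕ) < 0)]
        push_cast
        ring
      · intro k hk hk0
        have hk1 : 1 ≤ k := Nat.one_le_iff_ne_zero.mpr hk0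
        rw [if_neg, mul_zero]
        intro ⟨ha, _⟩
        have : c * 1 ≤ c * k := by
          apply mul_le_mul_of_nonneg_left _ hc.le; exact_mod_cast hk1
        nlinarith
      · intro h; simp at h
    · -- 0 ≤ j case
      set n : ℕ := j.toNat with hn_def
      have hn : (n : ℤ) = j := Int.toNat_of_nonneg hj0
      have hnm : n ≤ m := by omega
      have hnR : (n : ℝ) = (j : ℝ) := by exact_mod_cast congrArg (Int.cast : ℤ → ℝ) hn
      have hyn1 : (n : ℝ) * c < y := by rw [hnR]; exact hj1
      have hyn2 : y < ((n : ℝ) + 1) * c := by rw [hnR]; exact hj2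
      have hsub : ({n, n + 1} : Finset ℕ) ⊆ Finset.range (m + 2) := by
        intro k hk; simp at hk; rcases hk with h | h <;> simp [h] <;> omega
      rw [← Finset.sum_subset hsub (by
        intro k hk hknot
        simp at hknot
        rw [if_neg, mul_zero]
        rintro ⟨ha, hb⟩
        rcases Nat.lt_or_ge k n with h | h
        · -- k < n : y - c k > c
          have h1 : (k : ℝ) + 1 ≤ (n : ℝ) := by exact_mod_cast h
          have : ((k : ℝ) + 1) * c ≤ (n : ℝ) * c := mul_le_mul_of_nonneg_right h1 hc.le
          nlinarith
        · have h2 : n + 2 ≤ k := by omega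
          have h1 : (n : ℝ) + 2 ≤ (k : ℝ) := by exact_mod_cast h2
          have : ((n : ℝ) + 2) * c ≤ (k : ℝ) * c := mul_le_mul_of_nonneg_right h1 hc.le
          nlinarith)]
      rw [Finset.sum_pair (by omega : n ≠ n + 1)]
      have hb1 : binomProb m q j = (m.choose n : ℝ) * q ^ n * (1 - q) ^ (m - n) := by
        rw [binomProb, if_pos ⟨hj0, hjm⟩, ← hn_def]
      have hb2 : binomProb m q (j + 1) = (m.choose (n + 1) : ℝ) * q ^ (n + 1) * (1 - q) ^ (m - (n + 1)) := by
        rcases Nat.lt_or_ge n m with h | h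
        · rw [binomProb, if_pos ⟨by omega, by omega⟩]
          have : (j + 1).toNat = n + 1 := by omega
          rw [this]
        · have hnm' : n = m := by omega
          rw [binomProb, if_neg (by omega), hnm', Nat.choose_succ_self]
          simp
      rw [hb1, hb2]
      have hcn : (0:ℝ) ≤ c * (n:ℝ) := by positivity
      have hmm1 : y - c * ((n:ℕ):ℝ) ∈ Set.Icc (-c) c := by
        simp only [Set.mem_Icc]; constructor <;> nlinarith
      have hmm2 : y - c * ((n+1:ℕ):ℝ) ∈ Set.Icc (-c) c := by
        simp only [Set.mem_Icc]; push_cast; constructor <;> nlinarith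
      rw [if_pos hmm1, if_pos hmm2]
      have hab1 : (0:ℝ) < y - c * ((n:ℕ):ℝ) := by nlinarith
      have hab2 : y - c * ((n+1:ℕ):ℝ) < 0 := by push_cast; nlinarith
      rw [abs_of_pos hab1, abs_of_neg hab2]
      rw [← hnR]
      have hcCs : c = C / (s : ℝ) := hc_def
      set a : ℝ := (m.choose n : ℝ) * q ^ n * (1 - q) ^ (m - n)
      set b : ℝ := (m.choose (n + 1) : ℝ) * q ^ (n + 1) * (1 - q) ^ (m - (n + 1))
      rw [hcCs]
      push_cast
      field_simp
      ring
  · rw [if_neg hmem]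
    simp only [Set.mem_Icc, not_and_or, not_le] at hmem
    apply Finset.sum_eq_zero
    intro k hk
    rcases hmem with h | h
    · rw [if_neg, mul_zero]
      rintro ⟨ha, _⟩
      have : (0:ℝ) ≤ c * k := by positivity
      nlinarith
    · have h' : ((m : ℝ) + 1) * c < y := by
        calc ((m : ℝ) + 1) * c = ((m : ℝ) + 1) * C / (s : ℝ) := by rw [hc_def]; ring
        _ < y := h
      simp at hk
      rcases Nat.lt_or_ge k (m + 1) with hkm | hkm
      · rw [if_neg, mul_zero]
        rintro ⟨_, hb⟩
        have h1 : (k : ℝ) + 1 ≤ (m : ℝ) + 1 := by exact_mod_cast hkm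
        have : ((k : ℝ) + 1) * c ≤ ((m : ℝ) + 1) * c := mul_le_mul_of_nonneg_right h1 hc.le
        nlinarith
      · have : k = m + 1 := by omega
        rw [this, Nat.choose_succ_self]
        simp



lemma lintegral_shift_aux (g : ℝ → ENNReal) (hg : Measurable g) (a : ℝ) {A : Set ℝ}
    (hA : MeasurableSet A) :
    ∫⁻ x in (fun x => x + a) ⁻¹' A, g x = ∫⁻ y in A, g (y - a) := by
  have h := (measurePreserving_add_right volume a).setLIntegral_comp_preimage hA
    (f := fun y => g (y - a)) (hg.comp (measurable_id.sub_const a))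
  simpa using h



/-- The sum `ψ = X + (C/s)·O` of an independent triangular random variable `X` (density
`s/C - (s²/C²)|x|` on `[-C/s, C/s]`) and a scaled `Binomial(m,q)` variable `O` has the
piecewise linear density
`f_ψ(y) = (s/C)[(k+1)P_k - k P_{k+1}] + (s²/C²)(P_{k+1} - P_k)·y` on `[kC/s, (k+1)C/s]`,
for `k = -1, 0, ..., m` (here `k = ⌊ys/C⌋`). -/
theorem bq_sum_density (s : ℕ) (hs : 0 < s) (C : ℝ) (hC : 0 < C)
    (m : ℕ) (q : ℝ) (hq : q ∈ Set.Icc (0 : ℝ) 1)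
    {Ω : Type*} [MeasurableSpace Ω] (P : Measure Ω) [IsProbabilityMeasure P]
    (X : Ω → ℝ) (O : Ω → ℕ) (hX : Measurable X) (hO : Measurable O)
    (hXdist : Measure.map X P = volume.withDensity (fun x =>
      ENNReal.ofReal (if x ∈ Set.Icc (-(C / (s : ℝ))) (C / (s : ℝ)) then
        (s : ℝ) / C - (s : ℝ) ^ 2 / C ^ 2 * |x| else 0)))
    (hOdist : ∀ k : ℕ, P {ω | O ω = k} =
      ENNReal.ofReal ((m.choose k : ℝ) * q ^ k * (1 - q) ^ (m - k)))
    (hindep : IndepFun X O P) :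
    Measure.map (fun ω => X ω + C / (s : ℝ) * (O ω : ℝ)) P =
      volume.withDensity (fun y => ENNReal.ofReal
        (if y ∈ Set.Icc (-(C / (s : ℝ))) (((m : ℝ) + 1) * C / (s : ℝ)) then
          ((s : ℝ) / C) * (((⌊y * (s : ℝ) / C⌋ : ℝ) + 1) * binomProb m q ⌊y * (s : ℝ) / C⌋
              - (⌊y * (s : ℝ) / C⌋ : ℝ) * binomProb m q (⌊y * (s : ℝ) / C⌋ + 1))
            + ((s : ℝ) ^ 2 / C ^ 2) *
              (binomProb m q (⌊y * (s : ℝ) / C⌋ + 1) - binomProb m q ⌊y * (s : ℝ) / C⌋) * y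
        else 0)) := by

  classical
  obtain ⟨hq0, hq1⟩ := hq
  have hs' : (0 : ℝ) < s := by exact_mod_cast hs
  set c : ℝ := C / (s : ℝ) with hc_def
  have hc : 0 < c := div_pos hC hs'
  set fR : ℝ → ℝ := fun x => if x ∈ Set.Icc (-c) c then (s : ℝ) / C - (s : ℝ) ^ 2 / C ^ 2 * |x|
    else 0 with hfR_def
  set pR : ℕ → ℝ := fun k => (m.choose k : ℝ) * q ^ k * (1 - q) ^ (m - k) with hpR_def
  have hpRnn : ∀ k, 0 ≤ pR k := by
    intro k
    have h1 : (0 : ℝ) ≤ 1 - q := by linarith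
    rw [hpR_def]
    positivity
  have hfRnn : ∀ x, 0 ≤ fR x := by
    intro x
    rw [hfR_def]
    dsimp only
    split
    · rename_i hx
      obtain ⟨h1, h2⟩ := hx
      have habs : |x| ≤ c := abs_le.mpr ⟨h1, h2⟩
      have h3 : (s : ℝ) ^ 2 / C ^ 2 * |x| ≤ (s : ℝ) ^ 2 / C ^ 2 * c :=
        mul_le_mul_of_nonneg_left habs (by positivity)
      have h4 : (s : ℝ) ^ 2 / C ^ 2 * c = (s : ℝ) / C := by
        rw [hc_def]; field_simp
      linarith
    · exact le_refl 0
  have hfRmeas : Measurable fR := by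
    rw [hfR_def]
    exact Measurable.ite measurableSet_Icc (by fun_prop) measurable_const
  have hfEmeas : Measurable fun x => ENNReal.ofReal (fR x) := hfRmeas.ennreal_ofReal
  have hmeas_shift : ∀ k : ℕ, Measurable fun y => ENNReal.ofReal (fR (y - c * k)) := fun k =>
    hfEmeas.comp (measurable_id.sub_const _)
  have key : Measure.map (fun ω => X ω + c * (O ω : ℝ)) P
      = volume.withDensity (fun y => ∑ k ∈ Finset.range (m + 2),
          ENNReal.ofReal (pR k) * ENNReal.ofReal (fR (y - c * k))) := by
    ext A hA
    have hmeasf : Measurable fun ω => X ω + c * (O ω : ℝ) := by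
      apply hX.add
      exact measurable_const.mul (measurable_from_top.comp hO)
    rw [Measure.map_apply hmeasf hA, withDensity_apply _ hA]
    have hdecomp : (fun ω => X ω + c * (O ω : ℝ)) ⁻¹' A
        = ⋃ k : ℕ, (X ⁻¹' ((fun x => x + c * k) ⁻¹' A) ∩ O ⁻¹' {k}) := by
      ext ω
      simp only [Set.mem_preimage, Set.mem_iUnion, Set.mem_inter_iff, Set.mem_singleton_iff]
      constructor
      · intro h; exact ⟨O ω, h, rfl⟩
      · rintro ⟨k, h1, rfl⟩; exact h1
    rw [hdecomp, measure_iUnion]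
    · have hterm : ∀ k : ℕ, P (X ⁻¹' ((fun x => x + c * k) ⁻¹' A) ∩ O ⁻¹' {k})
          = ENNReal.ofReal (pR k) * ∫⁻ y in A, ENNReal.ofReal (fR (y - c * k)) := by
        intro k
        have hBk : MeasurableSet ((fun x : ℝ => x + c * (k : ℝ)) ⁻¹' A) :=
          hA.preimage (measurable_add_const _)
        rw [hindep.measure_inter_preimage_eq_mul _ _ hBk (measurableSet_singleton k)]
        have h1 : P (X ⁻¹' ((fun x => x + c * (k : ℝ)) ⁻¹' A))
            = ∫⁻ y in A, ENNReal.ofReal (fR (y - c * k)) := by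
          rw [← Measure.map_apply hX hBk, hXdist, withDensity_apply _ hBk]
          exact lintegral_shift_aux _ hfEmeas _ hA
        have h2 : P (O ⁻¹' {k}) = ENNReal.ofReal (pR k) := by
          rw [show O ⁻¹' {k} = {ω | O ω = k} from rfl, hOdist k]
        rw [h1, h2, mul_comm]
      rw [tsum_congr hterm]
      rw [tsum_eq_sum (s := Finset.range (m + 2)) (by
        intro k hk
        have hmk : m < k := by simp at hk; omega
        have : pR k = 0 := by rw [hpR_def]; simp [Nat.choose_eq_zero_of_lt hmk]
        rw [this]
        simp)]
      rw [lintegral_finset_sum _ (fun k _ => (hmeas_shift k).const_mul _)]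
      exact Finset.sum_congr rfl (fun k _ => (lintegral_const_mul _ (hmeas_shift k)).symm)
    · intro i j hij
      apply Set.disjoint_left.mpr
      rintro ω ⟨_, hi⟩ ⟨_, hj⟩
      exact hij ((Set.mem_singleton_iff.mp hi).symm.trans (Set.mem_singleton_iff.mp hj))
    · exact fun k => (hX (hA.preimage (measurable_add_const _))).inter
        (hO (measurableSet_singleton k))

  have hnull : volume {y : ℝ | ∃ n : ℤ, y = (n : ℝ) * c} = 0 := by
    have heq : {y : ℝ | ∃ n : ℤ, y = (n : ℝ) * c} = Set.range (fun n : ℤ => (n : ℝ) * c) := by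
      ext y; simp [eq_comm]
    rw [heq]
    exact (Set.countable_range _).measure_zero _
  have hae : (fun y => ∑ k ∈ Finset.range (m + 2),
        ENNReal.ofReal (pR k) * ENNReal.ofReal (fR (y - c * k)))
      =ᵐ[(volume : Measure ℝ)] (fun y => ENNReal.ofReal
        (if y ∈ Set.Icc (-c) (((m : ℝ) + 1) * C / (s : ℝ)) then
          ((s : ℝ) / C) * (((⌊y * (s : ℝ) / C⌋ : ℝ) + 1) * binomProb m q ⌊y * (s : ℝ) / C⌋
              - (⌊y * (s : ℝ) / C⌋ : ℝ) * binomProb m q (⌊y * (s : ℝ) / C⌋ + 1))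
            + ((s : ℝ) ^ 2 / C ^ 2) *
              (binomProb m q (⌊y * (s : ℝ) / C⌋ + 1) - binomProb m q ⌊y * (s : ℝ) / C⌋) * y
        else 0)) := by
    filter_upwards [measure_eq_zero_iff_ae_notMem.mp hnull] with y hy
    have hy' : ∀ n : ℤ, y ≠ (n : ℝ) * (C / (s : ℝ)) := by
      intro n h
      exact hy ⟨n, by rw [hc_def]; exact h⟩
    have hcore := bq_core s hs C hC m q y hy'
    calc ∑ k ∈ Finset.range (m + 2), ENNReal.ofReal (pR k) * ENNReal.ofReal (fR (y - c * k))
        = ∑ k ∈ Finset.range (m + 2), ENNReal.ofReal (pR k * fR (y - c * k)) :=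
          Finset.sum_congr rfl fun k _ => (ENNReal.ofReal_mul (hpRnn k)).symm
      _ = ENNReal.ofReal (∑ k ∈ Finset.range (m + 2), pR k * fR (y - c * k)) :=
          (ENNReal.ofReal_sum_of_nonneg fun k _ => mul_nonneg (hpRnn k) (hfRnn _)).symm
      _ = _ := by
          congr 1

  exact key.trans (withDensity_congr_ae hae)
end

section
/- Fix R > 0 and an integer b ≥ 1, and let B = 2^b - 1. The minimizer of V(m,s) = m/(4s²) + 1/(6s²) over real s > 0, m ≥ 0 subject to 2s + m ≤ B and m = s²/R² is given by s = R·√(R² + B) - R², and at this point m = B + 2R² - 2R√(R² + B), and the constraint 2s + m = B holds with equality. -/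
set_option maxHeartbeats 800000 in
/-- The constrained minimization of the BQ noise variance `V(m,s) = m/(4s²) + 1/(6s²)`
over `s > 0`, `m ≥ 0` subject to the communication constraint `2s + m ≤ B`
(`B = 2^b - 1`) and the privacy constraint `m = s²/R²` is solved by
`s = R√(R² + B) - R²`, `m = B + 2R² - 2R√(R² + B)`, and at the optimum the
communication constraint holds with equality. -/
theorem bq_optimal_parameters (R : ℝ) (hR : 0 < R) (b : ℕ) (hb : 1 ≤ b) :
    let B : ℝ := 2 ^ b - 1
    let s₀ : ℝ := R * Real.sqrt (R ^ 2 + B) - R ^ 2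
    let m₀ : ℝ := s₀ ^ 2 / R ^ 2
    m₀ = B + 2 * R ^ 2 - 2 * R * Real.sqrt (R ^ 2 + B) ∧
    2 * s₀ + m₀ = B ∧
    0 < s₀ ∧ 0 ≤ m₀ ∧
    ∀ s m : ℝ, 0 < s → 0 ≤ m → 2 * s + m ≤ B → m = s ^ 2 / R ^ 2 →
      m₀ / (4 * s₀ ^ 2) + 1 / (6 * s₀ ^ 2) ≤ m / (4 * s ^ 2) + 1 / (6 * s ^ 2) := by
  intro B s₀ m₀
  have hR2 : (0:ℝ) < R ^ 2 := by positivity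
  have hB : (1:ℝ) ≤ B := by
    have h2 : (2:ℝ) ^ 1 ≤ 2 ^ b := by
      apply pow_le_pow_right₀ (by norm_num) hb
    simp only [B]
    norm_num at h2 ⊢
    linarith
  set t := Real.sqrt (R ^ 2 + B) with htdef
  have ht2 : t ^ 2 = R ^ 2 + B := Real.sq_sqrt (by nlinarith)
  have htnn : 0 ≤ t := Real.sqrt_nonneg _
  have htR : R < t := by nlinarith
  have hs0pos : 0 < s₀ := by
    have h : s₀ = R * (t - R) := by simp only [s₀]; ring
    rw [h]; exact mul_pos hR (by linarith)
  have hm0 : m₀ = (t - R) ^ 2 := by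
    simp only [m₀, s₀]
    field_simp
    ring
  have hm0eq : m₀ = B + 2 * R ^ 2 - 2 * R * t := by
    rw [hm0]; linear_combination ht2
  have hsum : 2 * s₀ + m₀ = B := by
    rw [hm0]; simp only [s₀]; nlinarith
  refine ⟨hm0eq, hsum, hs0pos, by rw [hm0]; positivity, ?_⟩
  intro s m hs hm hcomm hpriv
  -- show s ≤ s₀
  have hsle : s ≤ s₀ := by
    have h1 : 2 * s₀ + s₀ ^ 2 / R ^ 2 = B := hsum
    have h2 : 2 * s + s ^ 2 / R ^ 2 ≤ B := by rw [← hpriv]; exact hcomm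
    have e1 : s ^ 2 / R ^ 2 * R ^ 2 = s ^ 2 := div_mul_cancel₀ _ (ne_of_gt hR2)
    have e2 : s₀ ^ 2 / R ^ 2 * R ^ 2 = s₀ ^ 2 := div_mul_cancel₀ _ (ne_of_gt hR2)
    have key : 2 * s * R ^ 2 + s ^ 2 ≤ 2 * s₀ * R ^ 2 + s₀ ^ 2 := by
      have h3 : (2 * s + s ^ 2 / R ^ 2) * R ^ 2 ≤ B * R ^ 2 :=
        mul_le_mul_of_nonneg_right h2 hR2.le
      have h4 : (2 * s₀ + s₀ ^ 2 / R ^ 2) * R ^ 2 = B * R ^ 2 := by rw [h1]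
      nlinarith [h3, h4, e1, e2]
    by_contra h
    push_neg at h
    nlinarith [key, hs0pos, hs]
  have hobj : ∀ x : ℝ, 0 < x → (x ^ 2 / R ^ 2) / (4 * x ^ 2) + 1 / (6 * x ^ 2)
      = 1 / (4 * R ^ 2) + 1 / (6 * x ^ 2) := by
    intro x hx
    field_simp
  rw [hpriv, hobj s hs]
  have : m₀ / (4 * s₀ ^ 2) + 1 / (6 * s₀ ^ 2) = 1 / (4 * R ^ 2) + 1 / (6 * s₀ ^ 2) := by
    have : m₀ = s₀ ^ 2 / R ^ 2 := rfl
    rw [this]; exact hobj s₀ hs0pos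
  rw [this]
  have hss : s ^ 2 ≤ s₀ ^ 2 := by nlinarith
  have : 1 / (6 * s₀ ^ 2) ≤ 1 / (6 * s ^ 2) := by
    apply one_div_le_one_div_of_le (by positivity)
    nlinarith
  linarith
end
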